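/- Write x = (x_1, x_2) with x_1 in R^{n_1}, x_2 in R^{n_2}, let phi_R : R^{n_2} -> R be a C^infinity cutoff with phi_R(x_2) = 1 for |x_2| < R and phi_R(x_2) = 0 for |x_2| >= R + 1, and set f-tilde_R(x_1, x_2) = f(x_1, phi_R(x_2) x_2). Suppose h : R^n -> R is C^1 and satisfies h(x) >= c_h |x|^p for |x| > rho, with constants c_h, p, rho > 0, and suppose the pair (f, h) is zero-state detectable for an open set containing { |x| <= rho }. Then for every R > rho the pair (f-tilde_R, h) is zero-state detectable for a set containing { |x| <= rho }: every solution x(t) of x' = f-tilde_R(x) satisfying h(x(t)) = 0 for all t >= 0 converges to 0 as t -> infinity. -/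
import Mathlib


open MeasureTheory Set Filter
open scoped ENNReal

noncomputable section

/-- The state space `ℝⁿ = ℝ^{n₁} × ℝ^{n₂}` with the Euclidean (L²) norm. -/
abbrev St (n₁ n₂ : ℕ) :=
  WithLp 2 (EuclideanSpace ℝ (Fin n₁) × EuclideanSpace ℝ (Fin n₂))

def comp1 {n₁ n₂ : ℕ} (x : St n₁ n₂) : EuclideanSpace ℝ (Fin n₁) :=
  ((WithLp.equiv 2 _) x).1

def comp2 {n₁ n₂ : ℕ} (x : St n₁ n₂) : EuclideanSpace ℝ (Fin n₂) :=
  ((WithLp.equiv 2 _) x).2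

def mkSt {n₁ n₂ : ℕ} (x₁ : EuclideanSpace ℝ (Fin n₁)) (x₂ : EuclideanSpace ℝ (Fin n₂)) :
    St n₁ n₂ :=
  (WithLp.equiv 2 _).symm (x₁, x₂)

/-- Zero-state detectability of `(f, h)` for a neighborhood `V` of the origin. -/
def ZeroStateDetectable {E : Type*} [NormedAddCommGroup E] [NormedSpace ℝ E] [CompleteSpace E]
    (f : E → E) (h : E → ℝ) (V : Set E) : Prop :=
  ∀ y : ℝ → E,
    (∀ t : ℝ, 0 ≤ t → y t = y 0 + ∫ s in (0:ℝ)..t, f (y s)) →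
    y 0 ∈ V → (∀ t : ℝ, 0 ≤ t → h (y t) = 0) →
    Tendsto y atTop (nhds 0)

/-- with `f̃_R(x₁,x₂) = f(x₁, φ_R(x₂)x₂)` for a smooth cutoff `φ_R`, if `h`
is `C¹` with `h(x) ≥ c_h |x|^p` for `|x| > ρ` and `(f, h)` is zero-state detectable for an
open set containing the closed ball of radius `ρ`, then for every `R > ρ` every solution of
`x' = f̃_R(x)` along which `h` vanishes identically converges to `0` as `t → ∞`. -/
theorem statement18 (n₁ n₂ : ℕ)
    (f : St n₁ n₂ → St n₁ n₂) (hf : ContDiff ℝ 2 f) (hf0 : f 0 = 0)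
    (h : St n₁ n₂ → ℝ) (hh : ContDiff ℝ 1 h)
    (p c_h ρ : ℝ) (hp : 0 < p) (hch : 0 < c_h) (hρ : 0 < ρ)
    (hh_coer : ∀ x : St n₁ n₂, ρ < ‖x‖ → c_h * ‖x‖ ^ p ≤ h x)
    (V : Set (St n₁ n₂)) (hV_open : IsOpen V)
    (hV_ball : Metric.closedBall (0 : St n₁ n₂) ρ ⊆ V)
    (hdet : ZeroStateDetectable f h V)
    -- the family of smooth cutoff functions
    (φ : ℝ → EuclideanSpace ℝ (Fin n₂) → ℝ)
    (hφ : ∀ R : ℝ, 0 < R → ContDiff ℝ (⊤ : ℕ∞) (φ R) ∧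
      (∀ x₂ : EuclideanSpace ℝ (Fin n₂), ‖x₂‖ < R → φ R x₂ = 1) ∧
      (∀ x₂ : EuclideanSpace ℝ (Fin n₂), R + 1 ≤ ‖x₂‖ → φ R x₂ = 0))
    -- the truncated vector field
    (fR : ℝ → St n₁ n₂ → St n₁ n₂)
    (hfR : ∀ R x, fR R x = f (mkSt (comp1 x) (φ R (comp2 x) • comp2 x))) :
    ∀ R : ℝ, ρ < R →
      ∀ y : ℝ → St n₁ n₂,
        (∀ t : ℝ, 0 ≤ t → y t = y 0 + ∫ s in (0:ℝ)..t, fR R (y s)) →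
        (∀ t : ℝ, 0 ≤ t → h (y t) = 0) →
        Tendsto y atTop (nhds 0) := by
  intro R hR y hy hhy
  -- Along the trajectory the norm stays ≤ ρ, by coercivity of h.
  have hnorm : ∀ t : ℝ, 0 ≤ t → ‖y t‖ ≤ ρ := by
    intro t ht
    by_contra hgt
    push_neg at hgt
    have h1 := hh_coer (y t) hgt
    have h2 : (0:ℝ) < c_h * ‖y t‖ ^ p :=
      mul_pos hch (Real.rpow_pos_of_pos (hρ.trans hgt) p)
    rw [hhy t ht] at h1
    linarith
  have hRpos : 0 < R := hρ.trans hR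
  -- On the trajectory the truncated field agrees with f.
  have key : ∀ s : ℝ, 0 ≤ s → fR R (y s) = f (y s) := by
    intro s hs
    rw [hfR]
    have hsnd : ‖comp2 (y s)‖ ≤ ‖y s‖ := by
      have := WithLp.prod_norm_sq_eq_of_L2 (y s)
      have h1 := norm_nonneg (comp1 (y s))
      have h2 := norm_nonneg (comp2 (y s))
      have h3 := norm_nonneg (y s)
      have h4 : comp2 (y s) = (y s).snd := rfl
      rw [h4]
      nlinarith
    have hlt : ‖comp2 (y s)‖ < R := lt_of_le_of_lt (hsnd.trans (hnorm s hs)) hR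
    rw [(hφ R hRpos).2.1 _ hlt, one_smul]
    rfl
  -- Hence y solves the untruncated integral equation.
  have hy' : ∀ t : ℝ, 0 ≤ t → y t = y 0 + ∫ s in (0:ℝ)..t, f (y s) := by
    intro t ht
    rw [hy t ht]
    congr 1
    apply intervalIntegral.integral_congr
    intro s hs
    rw [Set.uIcc_of_le ht] at hs
    exact key s hs.1
  exact hdet y hy' (hV_ball (Metric.mem_closedBall.2 (by simpa using hnorm 0 le_rfl))) hhy
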